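/- Let K be a field, let (a,b) ∈ ℤ² with (a,b) ≠ (0,0), and let f₁, f₂ ∈ K⟨x,y,z⟩ be bihomogeneous with respect to the (a,b)-degree, i.e., a·deg_x w + b·deg_y w is the same for all monomials w of f₁, and likewise for f₂. If f₁ and f₂ are algebraically dependent over z, i.e., there exists a nonzero polynomial v(u₁,u₂,z) ∈ K⟨u₁,u₂,z⟩ with v(f₁,f₂,z) = 0, then deg_{(a,b)} f₁ and deg_{(a,b)} f₂ are either both nonnegative or both nonpositive. -/

import Mathlib

open MonoidAlgebra

noncomputable section

/-- The free associative algebra `K⟨x,y,z⟩` (also serving as `K⟨u₁,u₂,z⟩`);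
`x` is letter `0`, `y` is letter `1`, `z` is letter `2`. -/
abbrev FA (K : Type) [Field K] := MonoidAlgebra K (FreeMonoid (Fin 3))

variable (K : Type) [Field K]

/-- The generators `x = Xv 0`, `y = Xv 1`, `z = Xv 2`. -/
def Xv (i : Fin 3) : FA K := MonoidAlgebra.of K (FreeMonoid (Fin 3)) (FreeMonoid.of i)

/-- The substitution homomorphism sending the generators to `f 0, f 1, f 2`. -/
def subst (f : Fin 3 → FA K) : FA K →ₐ[K] FA K :=
  MonoidAlgebra.lift K (FA K) (FreeMonoid (Fin 3)) (FreeMonoid.lift f)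

/-- The `(a,b)`-degree of a monomial `w`: `a·deg_x w + b·deg_y w`. -/
def abDeg (a b : ℤ) (w : FreeMonoid (Fin 3)) : ℤ :=
  a * (FreeMonoid.toList w).count 0 + b * (FreeMonoid.toList w).count 1

/-!
Order monomials by shortlex, a linear order compatible with multiplication on both sides. If `L₁`,
`L₂` are the leading monomials of `f₁`, `f₂` and `w ↦ w(L₁, L₂, z)` is injective on monomials,
then the largest `w(L₁, L₂, z)` over the monomials `w` of `v ≠ 0` is the leading monomial of
`v(f₁, f₂, z)`, which is therefore nonzero. So it suffices that `{L₁, L₂, z}` is a code.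

Suppose `d₁ d₂ < 0`. Deleting `z` from `L₁`, `L₂` gives words `P`, `Q` of `(a,b)`-degrees `d₁`,
`d₂`. They do not commute: commuting words satisfy `P ^ |Q| = Q ^ |P|`, whence `|Q| d₁ = |P| d₂`.
Two non-commuting words form a code: if `x u = y v` with `u, v ∈ ⟨x, y⟩` and `y = x s`, then
`u = s v`, and `u ∈ ⟨x, x s⟩` is `1` or `x u'` with `u' ∈ ⟨x, s⟩`, so `x u' = s v` is a relation of
the same kind for the shorter pair `x`, `s`. Hence two factorizations over `{L₁, L₂, z}` of the
same word have the same `z`-free skeleton; the runs of `z` between the blocks are then recovered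
from the leading `z`'s, since `L₁` and `L₂` contain letters other than `z`.
-/

theorem List.Lex.append_of_length_eq {α : Type*} {r : α → α → Prop} :
    ∀ {u v : List α}, List.Lex r u v → u.length = v.length → ∀ w, List.Lex r (u ++ w) (v ++ w)
  | _, _, .nil, h, _ => by simp at h
  | _, _, .cons h, hl, w => .cons (h.append_of_length_eq (by simpa using hl) w)
  | _, _, .rel h, _, _ => .rel h

abbrev FreeMonoid.shortlexOrder {α : Type*} [LinearOrder α] : LinearOrder (FreeMonoid α) :=
  LinearOrder.lift' (fun w => toLex (w.length, w.toList)) fun _ _ h =>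
    FreeMonoid.toList.injective (congrArg (fun p => (ofLex p).2) h)

attribute [local instance] FreeMonoid.shortlexOrder

namespace FreeMonoid

section Shortlex

variable {α : Type*} [LinearOrder α]

theorem shortlex_lt_iff {u v : FreeMonoid α} :
    u < v ↔ u.length < v.length ∨ u.length = v.length ∧ List.Lex (· < ·) u.toList v.toList :=
  Prod.Lex.toLex_lt_toLex

instance : MulLeftStrictMono (FreeMonoid α) where
  elim w u v h := by
    dsimp only at h ⊢
    rw [shortlex_lt_iff] at h ⊢
    simp only [length_mul, toList_mul]
    exact h.imp (by omega) fun h => ⟨by omega, h.2.append_left _ _⟩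

instance : MulRightStrictMono (FreeMonoid α) where
  elim w u v h := by
    dsimp only [Function.swap] at h ⊢
    rw [shortlex_lt_iff] at h ⊢
    simp only [length_mul, toList_mul]
    exact h.imp (by omega) fun h => ⟨by omega, h.2.append_of_length_eq h.1 _⟩

end Shortlex

end FreeMonoid

namespace MonoidAlgebra

variable {R M ι : Type*}

def IsLeadingMonomial [Semiring R] [LE M] (f : MonoidAlgebra R M) (u : M) : Prop :=
  f.coeff u ≠ 0 ∧ ∀ w ∈ f.coeff.support, w ≤ u

section Semiring

variable [Semiring R] [LinearOrder M] {f g : MonoidAlgebra R M} {u v : M}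

theorem exists_isLeadingMonomial (hf : f ≠ 0) : ∃ u, IsLeadingMonomial f u := by
  have hne : f.coeff.support.Nonempty := by simpa [Finsupp.support_nonempty_iff] using hf
  exact ⟨_, Finsupp.mem_support_iff.mp (f.coeff.support.max'_mem hne),
    fun w hw => f.coeff.support.le_max' w hw⟩

theorem IsLeadingMonomial.coeff_eq_zero_of_lt (hf : IsLeadingMonomial f u) {w : M} (hw : u < w) :
    f.coeff w = 0 :=
  Finsupp.notMem_support_iff.mp fun hmem => (hf.2 w hmem).not_gt hw

variable [Monoid M]

theorem isLeadingMonomial_of [Nontrivial R] (m : M) : IsLeadingMonomial (of R M m) m := by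
  classical
  refine ⟨by simp [of_apply], fun w hw => ?_⟩
  simp only [of_apply, coeff_single, Finsupp.support_single _ one_ne_zero,
    Finset.mem_singleton] at hw
  exact hw.le

variable [NoZeroDivisors R] [MulLeftStrictMono M] [MulRightStrictMono M]

theorem IsLeadingMonomial.mul (hf : IsLeadingMonomial f u) (hg : IsLeadingMonomial g v) :
    IsLeadingMonomial (f * g) (u * v) := by
  classical
  have := mulLeftMono_of_mulLeftStrictMono M
  have := mulRightMono_of_mulRightStrictMono M
  have hunique : UniqueMul f.coeff.support g.coeff.support u v := by
    intro a b ha hb hab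
    by_contra hne
    rcases not_and_or.mp hne with hau | hbv
    · exact (mul_lt_mul_of_lt_of_le ((hf.2 a ha).lt_of_ne hau) (hg.2 b hb)).ne hab
    · exact (mul_lt_mul_of_le_of_lt (hf.2 a ha) ((hg.2 b hb).lt_of_ne hbv)).ne hab
  refine ⟨?_, fun w hw => ?_⟩
  · rw [coeff_mul_mul_of_uniqueMul hunique]
    exact mul_ne_zero hf.1 hg.1
  · obtain ⟨a, ha, b, hb, rfl⟩ := Finset.mem_mul.mp (support_coeff_mul_subset f g hw)
    exact mul_le_mul' (hf.2 a ha) (hg.2 b hb)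

theorem isLeadingMonomial_lift [Nontrivial R] {F : ι → MonoidAlgebra R M} {W : ι → M}
    (h : ∀ i, IsLeadingMonomial (F i) (W i)) (m : FreeMonoid ι) :
    IsLeadingMonomial (FreeMonoid.lift F m) (FreeMonoid.lift W m) := by
  induction m using FreeMonoid.recOn with
  | one => rw [map_one, map_one, ← map_one (of R M)]; exact isLeadingMonomial_of 1
  | of_mul i m ih => simpa using (h i).mul ih

end Semiring

theorem lift_injective_of_isLeadingMonomial [CommRing R] [NoZeroDivisors R]
    [Nontrivial R] [Monoid M] [LinearOrder M] [MulLeftStrictMono M] [MulRightStrictMono M]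
    {F : ι → MonoidAlgebra R M} {W : ι → M} (h : ∀ i, IsLeadingMonomial (F i) (W i))
    (hW : Function.Injective (FreeMonoid.lift W)) :
    Function.Injective (lift R (MonoidAlgebra R M) (FreeMonoid ι) (FreeMonoid.lift F)) := by
  classical
  refine (injective_iff_map_eq_zero _).mpr fun v hv => ?_
  by_contra hv0
  have hne : v.coeff.support.Nonempty := by simpa [Finsupp.support_nonempty_iff] using hv0
  obtain ⟨m₀, hm₀, hmax⟩ := v.coeff.support.exists_max_image (FreeMonoid.lift W) hne
  have hcoeff : (lift R _ _ (FreeMonoid.lift F) v).coeff (FreeMonoid.lift W m₀) =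
      v.coeff m₀ * (FreeMonoid.lift F m₀).coeff (FreeMonoid.lift W m₀) := by
    rw [lift_apply, Finsupp.sum, coeff_sum, Finset.sum_apply', Finset.sum_eq_single m₀]
    · simp
    · intro m hm hne
      have hlt : FreeMonoid.lift W m < FreeMonoid.lift W m₀ := (hmax m hm).lt_of_ne (hW.ne hne)
      simp [(isLeadingMonomial_lift h m).coeff_eq_zero_of_lt hlt]
    · exact fun h => absurd hm₀ h
  rw [hv] at hcoeff
  exact mul_ne_zero (Finsupp.mem_support_iff.mp hm₀) (isLeadingMonomial_lift h m₀).1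
    (by simpa using hcoeff.symm)

end MonoidAlgebra

namespace FreeMonoid

variable {α : Type*}

theorem length_pow (x : FreeMonoid α) (n : ℕ) : (x ^ n).length = n * x.length := by
  induction n with
  | zero => simp
  | succ n ih => rw [pow_succ, length_mul, ih, Nat.succ_mul]

theorem of_mul_eq_of_mul_iff {a b : α} {s t : FreeMonoid α} :
    of a * s = of b * t ↔ a = b ∧ s = t := by
  rw [← toList.injective.eq_iff, ← toList.injective.eq_iff]
  exact List.cons_eq_cons

theorem exists_eq_of_mul_of_ne_one {w : FreeMonoid α} (hw : w ≠ 1) : ∃ c w', w = of c * w' := by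
  cases w using FreeMonoid.casesOn with
  | one => exact absurd rfl hw
  | of_mul c w' => exact ⟨c, w', rfl⟩

theorem dvd_or_dvd_of_mul_eq_mul {x y u v : FreeMonoid α} (h : x * u = y * v) :
    x ∣ y ∨ y ∣ x := by
  rcases List.append_eq_append_iff.mp (congrArg toList h) with ⟨s, hs, -⟩ | ⟨s, hs, -⟩
  exacts [Or.inl ⟨ofList s, hs⟩, Or.inr ⟨ofList s, hs⟩]

theorem pow_length_eq_pow_length_of_commute {x y : FreeMonoid α} (h : Commute x y) :
    x ^ y.length = y ^ x.length := by
  have hlen : (x ^ y.length).length = (y ^ x.length).length := by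
    rw [length_pow, length_pow, mul_comm]
  exact toList.injective (List.append_inj (congrArg toList (h.pow_pow _ _).eq) hlen).1

theorem closure_pair_mul_le (x s : FreeMonoid α) :
    Submonoid.closure {x, x * s} ≤ Submonoid.closure {x, s} :=
  Submonoid.closure_le.mpr <| Set.insert_subset_iff.mpr
    ⟨Submonoid.subset_closure (by simp), Set.singleton_subset_iff.mpr <|
      mul_mem (Submonoid.subset_closure (by simp)) (Submonoid.subset_closure (by simp))⟩

theorem eq_one_or_exists_mul_of_mem_closure {x s u : FreeMonoid α}
    (hu : u ∈ Submonoid.closure {x, x * s}) :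
    u = 1 ∨ ∃ u' ∈ Submonoid.closure {x, s}, u = x * u' := by
  induction hu using Submonoid.closure_induction with
  | mem w hw =>
    rcases hw with rfl | rfl
    · exact Or.inr ⟨1, one_mem _, (mul_one w).symm⟩
    · exact Or.inr ⟨s, Submonoid.subset_closure (by simp), rfl⟩
  | one => exact Or.inl rfl
  | mul w w' _ hw' ihw ihw' =>
    rcases ihw with rfl | ⟨u', hu', rfl⟩
    · simpa using ihw'
    · exact Or.inr ⟨u' * w', mul_mem hu' (closure_pair_mul_le x s hw'), mul_assoc _ _ _⟩

theorem commute_of_mul_eq_mul {x y u v : FreeMonoid α} (hu : u ∈ Submonoid.closure {x, y})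
    (hv : v ∈ Submonoid.closure {x, y}) (h : x * u = y * v) : Commute x y := by
  induction hn : x.length + y.length using Nat.strong_induction_on generalizing x y u v with
  | _ n ih =>
  wlog hxy : x ∣ y generalizing x y u v
  · have hyx := (dvd_or_dvd_of_mul_eq_mul h).resolve_left hxy
    rw [Set.pair_comm] at hu hv
    exact (this hv hu h.symm (by omega) hyx).symm
  obtain ⟨s, rfl⟩ := hxy
  rcases eq_or_ne x 1 with rfl | hx
  · exact Commute.one_left _
  rw [mul_assoc] at h
  rcases eq_one_or_exists_mul_of_mem_closure hu with rfl | ⟨u', hu', rfl⟩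
  · rw [(mul_eq_one'.mp (mul_left_cancel h).symm).1, mul_one]
  · have hxs : Commute x s := by
      refine ih (x.length + s.length) ?_ hu' (closure_pair_mul_le x s hv) (mul_left_cancel h) rfl
      have := length_eq_zero.not.mpr hx
      rw [← hn, length_mul]
      omega
    exact (Commute.refl x).mul_right hxs

theorem ne_one_of_not_commute {x y w : FreeMonoid α} (hxy : ¬Commute x y) (hw : w ∈ [x, y]) :
    w ≠ 1 := by
  rintro rfl
  simp only [List.mem_cons, List.not_mem_nil, or_false] at hw
  rcases hw with rfl | rfl
  exacts [hxy (Commute.one_left y), hxy (Commute.one_right x)]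

theorem eq_of_prod_eq_of_not_commute {x y : FreeMonoid α} (hxy : ¬Commute x y) :
    ∀ {l₁ l₂ : List (FreeMonoid α)}, l₁ ⊆ [x, y] → l₂ ⊆ [x, y] → l₁.prod = l₂.prod → l₁ = l₂
  | [], [], _, _, _ => rfl
  | [], _ :: _, _, h₂, h =>
    absurd (mul_eq_one'.mp h.symm).1 (ne_one_of_not_commute hxy (h₂ List.mem_cons_self))
  | _ :: _, [], h₁, _, h =>
    absurd (mul_eq_one'.mp h).1 (ne_one_of_not_commute hxy (h₁ List.mem_cons_self))
  | w :: t, w' :: t', h₁, h₂, h => by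
    obtain ⟨hw, ht⟩ := List.cons_subset.mp h₁
    obtain ⟨hw', ht'⟩ := List.cons_subset.mp h₂
    simp only [List.prod_cons] at h
    by_cases hww' : w = w'
    · subst hww'
      rw [eq_of_prod_eq_of_not_commute hxy ht ht' (mul_left_cancel h)]
    have hmem : ∀ {l : List (FreeMonoid α)}, l ⊆ [x, y] → l.prod ∈ Submonoid.closure {x, y} :=
      fun hl => Submonoid.list_prod_mem _ fun v hv =>
        Submonoid.subset_closure (by simpa using hl hv)
    simp only [List.mem_cons, List.not_mem_nil, or_false] at hw hw'
    rcases hw with rfl | rfl <;> rcases hw' with rfl | rfl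
    · exact absurd rfl hww'
    · exact absurd (commute_of_mul_eq_mul (hmem ht) (hmem ht') h) hxy
    · rw [Set.pair_comm] at hmem
      exact absurd (commute_of_mul_eq_mul (hmem ht) (hmem ht') h).symm hxy
    · exact absurd rfl hww'

theorem eq_of_pow_mul_of_mul_eq {z e : α} (he : e ≠ z) {a b : ℕ} {s t : FreeMonoid α}
    (h : of z ^ a * (of e * s) = of z ^ b * (of e * t)) : a = b ∧ s = t := by
  induction a generalizing b with
  | zero =>
    cases b with
    | zero => simpa [of_mul_eq_of_mul_iff] using h
    | succ b =>
      rw [pow_zero, one_mul, pow_succ', mul_assoc, of_mul_eq_of_mul_iff] at h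
      exact absurd h.1 he
  | succ a ih =>
    cases b with
    | zero =>
      rw [pow_zero, one_mul, pow_succ', mul_assoc, of_mul_eq_of_mul_iff] at h
      exact absurd h.1.symm he
    | succ b =>
      rw [pow_succ', pow_succ', mul_assoc, mul_assoc, of_mul_eq_of_mul_iff] at h
      simpa using ih h.2

section eraseLetter

variable [DecidableEq α]

def eraseLetter (z : α) : FreeMonoid α →* FreeMonoid α where
  toFun w := ofList (w.toList.filter (· ≠ z))
  map_one' := rfl
  map_mul' _ _ := List.filter_append ..

theorem toList_eraseLetter (z : α) (w : FreeMonoid α) :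
    toList (eraseLetter z w) = w.toList.filter (· ≠ z) :=
  rfl

theorem eraseLetter_of (z c : α) : eraseLetter z (of c) = if c = z then 1 else of c := by
  by_cases hc : c = z <;> simp [eraseLetter, hc]

theorem lift_eraseLetter {M : Type*} [Monoid M] {g : α → M} {z : α} (hz : g z = 1)
    (w : FreeMonoid α) : lift g (eraseLetter z w) = lift g w := by
  have : (lift g).comp (eraseLetter z) = lift g :=
    hom_eq fun c => by by_cases hc : c = z <;> simp [eraseLetter_of, hc, hz]
  exact DFunLike.congr_fun this w

theorem eq_pow_of_eraseLetter_eq_one {z : α} {w : FreeMonoid α} (h : eraseLetter z w = 1) :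
    w = of z ^ w.length := by
  induction w using FreeMonoid.recOn with
  | one => rfl
  | of_mul c w ih =>
    rw [map_mul, eraseLetter_of] at h
    by_cases hc : c = z
    · rw [if_pos hc, one_mul] at h
      rw [hc, length_mul, length_of, add_comm, pow_succ', ← ih h]
    · rw [if_neg hc] at h
      exact absurd (mul_eq_one'.mp h).1 (of_ne_one c)

theorem exists_eq_pow_mul_of_eraseLetter_eq {z e : α} {w r : FreeMonoid α}
    (h : eraseLetter z w = of e * r) :
    e ≠ z ∧ ∃ c w', w = of z ^ c * (of e * w') ∧ eraseLetter z w' = r := by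
  induction w using FreeMonoid.recOn with
  | one => exact absurd (mul_eq_one'.mp h.symm).1 (of_ne_one e)
  | of_mul c w ih =>
    rw [map_mul, eraseLetter_of] at h
    by_cases hc : c = z
    · rw [if_pos hc, one_mul] at h
      obtain ⟨hez, n, w', rfl, hr⟩ := ih h
      exact ⟨hez, n + 1, w', by rw [hc, pow_succ', mul_assoc], hr⟩
    · rw [if_neg hc, of_mul_eq_of_mul_iff] at h
      obtain ⟨rfl, rfl⟩ := h
      exact ⟨hc, 0, w, by rw [pow_zero, one_mul], rfl⟩

theorem eq_of_lift_eq_of_eraseLetter_eq {ι : Type*} [DecidableEq ι] {W : ι → FreeMonoid α}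
    {k : ι} {z : α} (hk : W k = of z) (hW : ∀ i ≠ k, eraseLetter z (W i) ≠ 1)
    {m m' : FreeMonoid ι} (he : eraseLetter k m = eraseLetter k m') (h : lift W m = lift W m') :
    m = m' := by
  generalize hn : eraseLetter k m = n at he
  induction n using FreeMonoid.recOn generalizing m m' with
  | one =>
    rw [eq_pow_of_eraseLetter_eq_one hn, eq_pow_of_eraseLetter_eq_one he.symm] at h ⊢
    simp only [map_pow, lift_eval_of, hk] at h
    exact congrArg _ (by simpa [length_pow] using congrArg length h)
  | of_mul i n ih =>
    obtain ⟨hik, a, r, rfl, hr⟩ := exists_eq_pow_mul_of_eraseLetter_eq hn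
    obtain ⟨-, b, r', rfl, hr'⟩ := exists_eq_pow_mul_of_eraseLetter_eq he.symm
    obtain ⟨e, E, hE⟩ := exists_eq_of_mul_of_ne_one (hW i hik)
    obtain ⟨hez, c, H, hWi, -⟩ := exists_eq_pow_mul_of_eraseLetter_eq hE
    have h' : of z ^ (a + c) * (of e * (H * lift W r)) =
        of z ^ (b + c) * (of e * (H * lift W r')) := by
      simpa only [map_mul, map_pow, lift_eval_of, hk, hWi, pow_add, mul_assoc] using h
    obtain ⟨hab, hrr⟩ := eq_of_pow_mul_of_mul_eq hez h'
    rw [Nat.add_right_cancel hab, ih (mul_left_cancel hrr) hr hr'.symm]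

theorem lift_injective_of_not_commute {W : Fin 3 → FreeMonoid α} {z : α} (h2 : W 2 = of z)
    (hW : ¬Commute (eraseLetter z (W 0)) (eraseLetter z (W 1))) :
    Function.Injective (lift W) := by
  set g : Fin 3 → FreeMonoid α := eraseLetter z ∘ W
  replace hW : ¬Commute (g 0) (g 1) := hW
  have hg2 : g 2 = 1 := by simp [g, h2, eraseLetter_of]
  have hg0 : g 0 ≠ 1 := ne_one_of_not_commute hW (by simp)
  have hg1 : g 1 ≠ 1 := ne_one_of_not_commute hW (by simp)
  have hg01 : g 0 ≠ g 1 := fun h => hW (by rw [← h])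
  have hg_inj : Function.Injective g := by
    intro i j hij
    fin_cases i <;> fin_cases j <;> simp_all [eq_comm]
  have hsub : ∀ m : FreeMonoid (Fin 3), (eraseLetter 2 m).toList.map g ⊆ [g 0, g 1] := by
    intro m w hw
    obtain ⟨i, hi, rfl⟩ := List.mem_map.mp hw
    have : i ≠ 2 := by simpa using (List.mem_filter.mp hi).2
    fin_cases i <;> simp_all
  intro m m' h
  refine eq_of_lift_eq_of_eraseLetter_eq h2 (fun i hi => ?_) ?_ h
  · fin_cases i
    exacts [hg0, hg1, absurd rfl hi]
  · have hprod :
        ((eraseLetter 2 m).toList.map g).prod = ((eraseLetter 2 m').toList.map g).prod := by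
      rw [← lift_apply, ← lift_apply, lift_eraseLetter hg2, lift_eraseLetter hg2]
      have := congrArg (eraseLetter z) h
      rwa [hom_map_lift, hom_map_lift] at this
    exact toList.injective <| List.map_injective_iff.mpr hg_inj <|
      eq_of_prod_eq_of_not_commute hW (hsub m) (hsub m') hprod

end eraseLetter

end FreeMonoid

open FreeMonoid

theorem abDeg_mul (a b : ℤ) (u v : FreeMonoid (Fin 3)) :
    abDeg a b (u * v) = abDeg a b u + abDeg a b v := by
  simp only [abDeg, toList_mul, List.count_append]
  push_cast
  ring

theorem abDeg_pow (a b : ℤ) (w : FreeMonoid (Fin 3)) (n : ℕ) :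
    abDeg a b (w ^ n) = n * abDeg a b w := by
  induction n with
  | zero => simp [abDeg, toList_one]
  | succ n ih =>
    rw [pow_succ, abDeg_mul, ih]
    push_cast
    ring

theorem abDeg_eraseLetter_two (a b : ℤ) (w : FreeMonoid (Fin 3)) :
    abDeg a b (eraseLetter 2 w) = abDeg a b w := by
  rw [abDeg, abDeg, toList_eraseLetter, List.count_filter (by decide),
    List.count_filter (by decide)]

theorem not_commute_of_abDeg_mul_neg {a b : ℤ} {x y : FreeMonoid (Fin 3)}
    (h : abDeg a b x * abDeg a b y < 0) : ¬Commute x y := by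
  intro hc
  have hpow := congrArg (abDeg a b) (pow_length_eq_pow_length_of_commute hc)
  rw [abDeg_pow, abDeg_pow] at hpow
  have hy : (0 : ℤ) < y.length := by
    have : y ≠ 1 := by rintro rfl; simp [abDeg, toList_one] at h
    exact_mod_cast Nat.pos_of_ne_zero (length_eq_zero.not.mpr this)
  have key : (y.length : ℤ) * (abDeg a b x * abDeg a b y) = x.length * abDeg a b y ^ 2 := by
    linear_combination abDeg a b y * hpow
  linarith [mul_neg_of_pos_of_neg hy h,
    mul_nonneg (Nat.cast_nonneg x.length) (sq_nonneg (abDeg a b y))]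

theorem abDeg_same_sign_of_algebraically_dependent (a b : ℤ)
    (f₁ f₂ : FA K) (hf₁ : f₁ ≠ 0) (hf₂ : f₂ ≠ 0) (d₁ d₂ : ℤ)
    (h₁ : ∀ w ∈ f₁.coeff.support, abDeg a b w = d₁)
    (h₂ : ∀ w ∈ f₂.coeff.support, abDeg a b w = d₂)
    (hdep : ∃ v : FA K, v ≠ 0 ∧ subst K ![f₁, f₂, Xv K 2] v = 0) :
    (0 ≤ d₁ ∧ 0 ≤ d₂) ∨ (d₁ ≤ 0 ∧ d₂ ≤ 0) := by
  obtain ⟨v, hv, hv0⟩ := hdep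
  by_contra hsign
  obtain ⟨L₁, hL₁⟩ := exists_isLeadingMonomial hf₁
  obtain ⟨L₂, hL₂⟩ := exists_isLeadingMonomial hf₂
  have hlead : ∀ i, IsLeadingMonomial (![f₁, f₂, Xv K 2] i) (![L₁, L₂, FreeMonoid.of 2] i) := by
    intro i
    fin_cases i
    exacts [hL₁, hL₂, isLeadingMonomial_of _]
  have hdeg : abDeg a b (eraseLetter 2 L₁) * abDeg a b (eraseLetter 2 L₂) < 0 := by
    rw [abDeg_eraseLetter_two, abDeg_eraseLetter_two, h₁ L₁ (Finsupp.mem_support_iff.mpr hL₁.1),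
      h₂ L₂ (Finsupp.mem_support_iff.mpr hL₂.1)]
    exact mul_neg_iff.mpr (by omega)
  have hinj := lift_injective_of_isLeadingMonomial hlead
    (lift_injective_of_not_commute rfl (not_commute_of_abDeg_mul_neg hdeg))
  exact hv (hinj (hv0.trans (map_zero _).symm))
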